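/- Let M = U* Σ* V*ᵀ, where U*, V* ∈ ℝ^{n×k} are orthonormal and Σ* ∈ ℝ^{k×k} is diagonal with diagonal entries σ₁* ≥ … ≥ σ_k* > 0. Let U ∈ ℝ^{n×k} be orthonormal with σ_k(U*ᵀU) > 0, let F ∈ ℝ^{n×k} satisfy ‖F‖₂/σ_k(U*ᵀU) < σ_k*, and set Ṽ = V* Σ* U*ᵀU − F. Then V*ᵀṼ is invertible (so Ṽ has full column rank k), and for every orthonormal V̄ ∈ ℝ^{n×k} whose columns span the column space of Ṽ, one has dist(V̄, V*) ≤ (‖F‖₂/σ_k(U*ᵀU)) / (σ_k* − ‖F‖₂/σ_k(U*ᵀU)). -/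
import Mathlib

open Matrix

/-- Euclidean norm of a vector in `ℝ^k`. -/
noncomputable def vecNorm {k : ℕ} (v : Fin k → ℝ) : ℝ := Real.sqrt (∑ i, v i ^ 2)

/-- Spectral norm (largest singular value) of a real matrix. -/
noncomputable def specNorm {m n : ℕ} (A : Matrix (Fin m) (Fin n) ℝ) : ℝ :=
  sSup {c : ℝ | ∃ x : Fin n → ℝ, vecNorm x = 1 ∧ c = vecNorm (A.mulVec x)}

/-- Least singular value of a square real matrix. -/
noncomputable def sigmaMin {k : ℕ} (B : Matrix (Fin k) (Fin k) ℝ) : ℝ :=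
  sInf {c : ℝ | ∃ x : Fin k → ℝ, vecNorm x = 1 ∧ c = vecNorm (B.mulVec x)}

/-- Subspace distance between the column spaces of two orthonormal matrices. -/
noncomputable def distS {n k : ℕ} (X Y : Matrix (Fin n) (Fin k) ℝ) : ℝ :=
  specNorm (X * Xᵀ - Y * Yᵀ)

section VecNormLemmas

variable {m n k : ℕ}

lemma vecNorm_nonneg (v : Fin k → ℝ) : 0 ≤ vecNorm v := Real.sqrt_nonneg _

lemma sumsq_nonneg (v : Fin k → ℝ) : (0:ℝ) ≤ ∑ i, v i ^ 2 :=
  Finset.sum_nonneg fun _ _ => sq_nonneg _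

lemma sq_vecNorm (v : Fin k → ℝ) : vecNorm v ^ 2 = v ⬝ᵥ v := by
  rw [vecNorm, Real.sq_sqrt (sumsq_nonneg v)]
  simp [dotProduct, pow_two]

lemma vecNorm_eq_sqrt_dot (v : Fin k → ℝ) : vecNorm v = Real.sqrt (v ⬝ᵥ v) := by
  rw [vecNorm]; congr 1; simp [dotProduct, pow_two]

lemma le_of_sq_le_sq' {a b : ℝ} (hb : 0 ≤ b) (h : a ^ 2 ≤ b ^ 2) : a ≤ b := by
  nlinarith [sq_nonneg (a - b), sq_nonneg (a + b)]

lemma vecNorm_zero' : vecNorm (0 : Fin k → ℝ) = 0 := by simp [vecNorm]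

lemma vecNorm_neg (v : Fin k → ℝ) : vecNorm (-v) = vecNorm v := by
  simp [vecNorm, neg_sq]

lemma vecNorm_smul (c : ℝ) (v : Fin k → ℝ) : vecNorm (c • v) = |c| * vecNorm v := by
  rw [vecNorm, vecNorm]
  simp only [Pi.smul_apply, smul_eq_mul, mul_pow, ← Finset.mul_sum]
  rw [Real.sqrt_mul (sq_nonneg c), Real.sqrt_sq_eq_abs]

lemma vecNorm_pos {v : Fin k → ℝ} (h : v ≠ 0) : 0 < vecNorm v := by
  rcases (vecNorm_nonneg v).lt_or_eq with h1 | h1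
  · exact h1
  · exfalso; apply h
    have hs : ∑ i, v i ^ 2 ≤ 0 := Real.sqrt_eq_zero'.mp h1.symm
    have hs0 : ∑ i, v i ^ 2 = 0 := le_antisymm hs (sumsq_nonneg v)
    funext i
    have := (Finset.sum_eq_zero_iff_of_nonneg (fun i _ => sq_nonneg (v i))).mp hs0 i
      (Finset.mem_univ i)
    exact (pow_eq_zero_iff two_ne_zero).mp this

lemma dot_le_norm_mul_norm (v w : Fin k → ℝ) : v ⬝ᵥ w ≤ vecNorm v * vecNorm w := by
  have h := Finset.sum_mul_sq_le_sq_mul_sq Finset.univ v w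
  have h2 : (v ⬝ᵥ w) ^ 2 ≤ (vecNorm v * vecNorm w) ^ 2 := by
    rw [mul_pow, vecNorm, vecNorm, Real.sq_sqrt (sumsq_nonneg v), Real.sq_sqrt (sumsq_nonneg w)]
    simpa [dotProduct] using h
  exact le_of_sq_le_sq' (mul_nonneg (vecNorm_nonneg v) (vecNorm_nonneg w)) h2

lemma norm_add_sq_of_orth {v w : Fin k → ℝ} (h : v ⬝ᵥ w = 0) :
    vecNorm (v + w) ^ 2 = vecNorm v ^ 2 + vecNorm w ^ 2 := by
  rw [sq_vecNorm, sq_vecNorm, sq_vecNorm, add_dotProduct, dotProduct_add, dotProduct_add,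
    h, dotProduct_comm w v, h]
  ring

lemma vecNorm_sub_ge (v w : Fin k → ℝ) : vecNorm v - vecNorm w ≤ vecNorm (v - w) := by
  have hexp : vecNorm (v - w) ^ 2 = vecNorm v ^ 2 - 2 * (v ⬝ᵥ w) + vecNorm w ^ 2 := by
    rw [sq_vecNorm (v - w), sq_vecNorm v, sq_vecNorm w, sub_dotProduct, dotProduct_sub,
      dotProduct_sub, dotProduct_comm w v]
    ring
  have hcs := dot_le_norm_mul_norm v w
  refine le_of_sq_le_sq' (vecNorm_nonneg _) ?_
  rw [hexp]; nlinarith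

lemma exists_unit_vec (hk : 0 < k) : ∃ x : Fin k → ℝ, vecNorm x = 1 := by
  refine ⟨Pi.single ⟨0, hk⟩ 1, ?_⟩
  have h : ∀ i, ((Pi.single (⟨0, hk⟩ : Fin k) (1:ℝ) : Fin k → ℝ) i) ^ 2
      = if i = ⟨0, hk⟩ then (1:ℝ) else 0 := by
    intro i; rw [Pi.single_apply]; by_cases h : i = ⟨0, hk⟩ <;> simp [h]
  rw [vecNorm]
  simp only [h, Finset.sum_ite_eq', Finset.mem_univ, if_true, Real.sqrt_one]

end VecNormLemmas
section SpecLemmas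
open Matrix
variable {m n k : ℕ}

lemma mulVec_norm_le_frob (A : Matrix (Fin m) (Fin n) ℝ) {x : Fin n → ℝ} (hx : vecNorm x = 1) :
    vecNorm (A *ᵥ x) ≤ Real.sqrt (∑ i, ∑ j, A i j ^ 2) := by
  have hx2 : ∑ j, x j ^ 2 = 1 := by
    have h : Real.sqrt (∑ j, x j ^ 2) = 1 := hx
    have h2 := Real.sq_sqrt (sumsq_nonneg x)
    rw [h] at h2
    simpa using h2.symm
  refine le_of_sq_le_sq' (Real.sqrt_nonneg _) ?_
  rw [Real.sq_sqrt (by positivity), vecNorm, Real.sq_sqrt (sumsq_nonneg _)]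
  calc ∑ i, (A *ᵥ x) i ^ 2
      ≤ ∑ i, (∑ j, A i j ^ 2) * (∑ j, x j ^ 2) := by
        refine Finset.sum_le_sum fun i _ => ?_
        simpa [Matrix.mulVec, dotProduct] using
          Finset.sum_mul_sq_le_sq_mul_sq Finset.univ (A i) x
    _ = ∑ i, ∑ j, A i j ^ 2 := by simp [hx2]

lemma bddAbove_spec (A : Matrix (Fin m) (Fin n) ℝ) :
    BddAbove {c : ℝ | ∃ x : Fin n → ℝ, vecNorm x = 1 ∧ c = vecNorm (A.mulVec x)} := by
  refine ⟨Real.sqrt (∑ i, ∑ j, A i j ^ 2), ?_⟩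
  rintro c ⟨x, hx, rfl⟩
  exact mulVec_norm_le_frob A hx

lemma le_specNorm (A : Matrix (Fin m) (Fin n) ℝ) {x : Fin n → ℝ} (hx : vecNorm x = 1) :
    vecNorm (A *ᵥ x) ≤ specNorm A :=
  le_csSup (bddAbove_spec A) ⟨x, hx, rfl⟩

lemma specNorm_nonneg (A : Matrix (Fin m) (Fin n) ℝ) (hn : 0 < n) : 0 ≤ specNorm A := by
  obtain ⟨x, hx⟩ := exists_unit_vec hn
  exact (vecNorm_nonneg _).trans (le_specNorm A hx)

lemma mulVec_le_specNorm (A : Matrix (Fin m) (Fin n) ℝ) (x : Fin n → ℝ) :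
    vecNorm (A *ᵥ x) ≤ specNorm A * vecNorm x := by
  by_cases hx : x = 0
  · simp [hx, vecNorm_zero']
  · have hpos := vecNorm_pos hx
    set u : Fin n → ℝ := (vecNorm x)⁻¹ • x with hu_def
    have hu : vecNorm u = 1 := by
      rw [hu_def, vecNorm_smul, abs_of_pos (inv_pos.2 hpos), inv_mul_cancel₀ hpos.ne']
    have hxu : A *ᵥ x = vecNorm x • (A *ᵥ u) := by
      rw [hu_def, Matrix.mulVec_smul, smul_smul, mul_inv_cancel₀ hpos.ne', one_smul]
    rw [hxu, vecNorm_smul, abs_of_pos hpos, mul_comm (specNorm A) (vecNorm x)]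
    exact mul_le_mul_of_nonneg_left (le_specNorm A hu) hpos.le

lemma sigmaMin_le (B : Matrix (Fin k) (Fin k) ℝ) {x : Fin k → ℝ} (hx : vecNorm x = 1) :
    sigmaMin B ≤ vecNorm (B *ᵥ x) := by
  refine csInf_le ⟨0, ?_⟩ ⟨x, hx, rfl⟩
  rintro c ⟨y, hy, rfl⟩
  exact vecNorm_nonneg _

lemma sigmaMin_mul_le (B : Matrix (Fin k) (Fin k) ℝ) (x : Fin k → ℝ) :
    sigmaMin B * vecNorm x ≤ vecNorm (B *ᵥ x) := by
  by_cases hx : x = 0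
  · simp [hx, vecNorm_zero']
  · have hpos := vecNorm_pos hx
    set u : Fin k → ℝ := (vecNorm x)⁻¹ • x with hu_def
    have hu : vecNorm u = 1 := by
      rw [hu_def, vecNorm_smul, abs_of_pos (inv_pos.2 hpos), inv_mul_cancel₀ hpos.ne']
    have hxu : B *ᵥ x = vecNorm x • (B *ᵥ u) := by
      rw [hu_def, Matrix.mulVec_smul, smul_smul, mul_inv_cancel₀ hpos.ne', one_smul]
    rw [hxu, vecNorm_smul, abs_of_pos hpos, mul_comm (sigmaMin B) (vecNorm x)]
    exact mul_le_mul_of_nonneg_left (sigmaMin_le B hu) hpos.le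

lemma isUnit_of_vec_lower {B : Matrix (Fin k) (Fin k) ℝ} {c : ℝ} (hc : 0 < c)
    (h : ∀ x : Fin k → ℝ, c * vecNorm x ≤ vecNorm (B *ᵥ x)) : IsUnit B := by
  rw [Matrix.isUnit_iff_isUnit_det, isUnit_iff_ne_zero]
  intro hdet
  obtain ⟨v, hv0, hv⟩ := (Matrix.exists_mulVec_eq_zero_iff).mpr hdet
  have hb := h v
  rw [hv, vecNorm_zero'] at hb
  have hp := vecNorm_pos hv0
  nlinarith

-- adjoint
lemma mulVec_dot (M : Matrix (Fin m) (Fin n) ℝ) (x : Fin n → ℝ) (y : Fin m → ℝ) :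
    (M *ᵥ x) ⬝ᵥ y = x ⬝ᵥ (Mᵀ *ᵥ y) := by
  rw [dotProduct_comm (M *ᵥ x) y, Matrix.dotProduct_mulVec, Matrix.mulVec_transpose]
  exact dotProduct_comm _ _

lemma norm_mulVec_orth {V : Matrix (Fin m) (Fin k) ℝ} (hV : Vᵀ * V = 1) (c : Fin k → ℝ) :
    vecNorm (V *ᵥ c) = vecNorm c := by
  rw [vecNorm_eq_sqrt_dot, vecNorm_eq_sqrt_dot c]
  congr 1
  rw [mulVec_dot, Matrix.mulVec_mulVec, hV, Matrix.one_mulVec]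

lemma norm_transpose_mulVec_le {V : Matrix (Fin m) (Fin k) ℝ} (hV : Vᵀ * V = 1)
    (z : Fin m → ℝ) : vecNorm (Vᵀ *ᵥ z) ≤ vecNorm z := by
  have h1 : vecNorm (Vᵀ *ᵥ z) ^ 2 = (V *ᵥ (Vᵀ *ᵥ z)) ⬝ᵥ z := by
    rw [sq_vecNorm, mulVec_dot V (Vᵀ *ᵥ z) z]
  have h2 : (V *ᵥ (Vᵀ *ᵥ z)) ⬝ᵥ z ≤ vecNorm (Vᵀ *ᵥ z) * vecNorm z := by
    have := dot_le_norm_mul_norm (V *ᵥ (Vᵀ *ᵥ z)) z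
    rwa [norm_mulVec_orth hV] at this
  rcases (vecNorm_nonneg (Vᵀ *ᵥ z)).eq_or_lt with h0 | h0
  · rw [← h0]; exact vecNorm_nonneg z
  · nlinarith

lemma proj_perp_dot {V : Matrix (Fin m) (Fin k) ℝ} (hV : Vᵀ * V = 1)
    (u : Fin m → ℝ) (w : Fin k → ℝ) :
    ((1 - V * Vᵀ) *ᵥ u) ⬝ᵥ (V *ᵥ w) = 0 := by
  rw [mulVec_dot]
  have h : (1 - V * Vᵀ)ᵀ * V = 0 := by
    rw [Matrix.transpose_sub, Matrix.transpose_one, Matrix.transpose_mul,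
      Matrix.transpose_transpose, Matrix.sub_mul, Matrix.one_mul,
      Matrix.mul_assoc, hV, Matrix.mul_one, sub_self]
  rw [Matrix.mulVec_mulVec, h, Matrix.zero_mulVec, dotProduct_zero]

lemma one_sub_proj_idem {V : Matrix (Fin m) (Fin k) ℝ} (hV : Vᵀ * V = 1) :
    (1 - V * Vᵀ) * (1 - V * Vᵀ) = 1 - V * Vᵀ := by
  have hPP : (V * Vᵀ) * (V * Vᵀ) = V * Vᵀ := by
    rw [Matrix.mul_assoc, ← Matrix.mul_assoc Vᵀ V Vᵀ, hV, Matrix.one_mul]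
  calc (1 - V * Vᵀ) * (1 - V * Vᵀ)
      = 1 - V * Vᵀ - V * Vᵀ + V * Vᵀ * (V * Vᵀ) := by noncomm_ring
    _ = 1 - V * Vᵀ := by rw [hPP]; abel

lemma one_sub_proj_transpose {V : Matrix (Fin m) (Fin k) ℝ} :
    (1 - V * Vᵀ)ᵀ = 1 - V * Vᵀ := by
  rw [Matrix.transpose_sub, Matrix.transpose_one, Matrix.transpose_mul,
    Matrix.transpose_transpose]

lemma norm_one_sub_proj_le {V : Matrix (Fin m) (Fin k) ℝ} (hV : Vᵀ * V = 1)
    (z : Fin m → ℝ) : vecNorm ((1 - V * Vᵀ) *ᵥ z) ≤ vecNorm z := by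
  have key : vecNorm ((1 - V * Vᵀ) *ᵥ z) ^ 2 = z ⬝ᵥ ((1 - V * Vᵀ) *ᵥ z) := by
    rw [sq_vecNorm, mulVec_dot, Matrix.mulVec_mulVec, one_sub_proj_transpose,
      one_sub_proj_idem hV]
  have hPz : z ⬝ᵥ ((V * Vᵀ) *ᵥ z) = (Vᵀ *ᵥ z) ⬝ᵥ (Vᵀ *ᵥ z) := by
    rw [← Matrix.mulVec_mulVec, dotProduct_comm, mulVec_dot]
  have h2 : z ⬝ᵥ ((1 - V * Vᵀ) *ᵥ z) ≤ z ⬝ᵥ z := by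
    rw [Matrix.sub_mulVec, dotProduct_sub, Matrix.one_mulVec, hPz]
    have := dot_le_norm_mul_norm (Vᵀ *ᵥ z) (Vᵀ *ᵥ z)
    nlinarith [sq_vecNorm (Vᵀ *ᵥ z), sq_nonneg (vecNorm (Vᵀ *ᵥ z))]
  refine le_of_sq_le_sq' (vecNorm_nonneg _) ?_
  rw [key, ← sq_vecNorm z] at *
  linarith [h2]

lemma perp_le_dist {V : Matrix (Fin m) (Fin k) ℝ} (hV : Vᵀ * V = 1)
    (u : Fin m → ℝ) (z : Fin k → ℝ) :
    vecNorm ((1 - V * Vᵀ) *ᵥ u) ≤ vecNorm (u - V *ᵥ z) := by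
  have hdecomp : u - V *ᵥ z = (1 - V * Vᵀ) *ᵥ u + V *ᵥ (Vᵀ *ᵥ u - z) := by
    rw [Matrix.sub_mulVec, Matrix.one_mulVec, Matrix.mulVec_sub, ← Matrix.mulVec_mulVec]
    abel
  have horth := proj_perp_dot hV u (Vᵀ *ᵥ u - z)
  refine le_of_sq_le_sq' (vecNorm_nonneg _) ?_
  rw [hdecomp, norm_add_sq_of_orth horth]
  nlinarith [sq_nonneg (vecNorm (V *ᵥ (Vᵀ *ᵥ u - z)))]

end SpecLemmas
section MoreLemmas
open Matrix
variable {m n k : ℕ}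

lemma dot_mulVec' (x : Fin m → ℝ) (M : Matrix (Fin m) (Fin n) ℝ) (y : Fin n → ℝ) :
    x ⬝ᵥ (M *ᵥ y) = (Mᵀ *ᵥ x) ⬝ᵥ y := by
  rw [dotProduct_comm, mulVec_dot, dotProduct_comm]

lemma sym_bound {V : Matrix (Fin m) (Fin k) ℝ} (hV : Vᵀ * V = 1)
    {A : Matrix (Fin m) (Fin m) ℝ} (hAT : Aᵀ = A) (hAI : A * A = A)
    {β : ℝ} (hβ : 0 ≤ β)
    (h : ∀ w : Fin k → ℝ, vecNorm (A *ᵥ (V *ᵥ w)) ≤ β * vecNorm w)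
    (x : Fin m → ℝ) :
    vecNorm (Vᵀ *ᵥ (A *ᵥ x)) ≤ β * vecNorm (A *ᵥ x) := by
  have hA2 : A *ᵥ (A *ᵥ x) = A *ᵥ x := by rw [Matrix.mulVec_mulVec, hAI]
  have h1 : vecNorm (Vᵀ *ᵥ (A *ᵥ x)) ^ 2
      = (A *ᵥ (V *ᵥ (Vᵀ *ᵥ (A *ᵥ x)))) ⬝ᵥ (A *ᵥ x) := by
    rw [sq_vecNorm]
    calc (Vᵀ *ᵥ (A *ᵥ x)) ⬝ᵥ (Vᵀ *ᵥ (A *ᵥ x))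
        = (V *ᵥ (Vᵀ *ᵥ (A *ᵥ x))) ⬝ᵥ (A *ᵥ x) :=
          (mulVec_dot V (Vᵀ *ᵥ (A *ᵥ x)) (A *ᵥ x)).symm
      _ = (V *ᵥ (Vᵀ *ᵥ (A *ᵥ x))) ⬝ᵥ (A *ᵥ (A *ᵥ x)) := by rw [hA2]
      _ = (Aᵀ *ᵥ (V *ᵥ (Vᵀ *ᵥ (A *ᵥ x)))) ⬝ᵥ (A *ᵥ x) := dot_mulVec' _ A _
      _ = (A *ᵥ (V *ᵥ (Vᵀ *ᵥ (A *ᵥ x)))) ⬝ᵥ (A *ᵥ x) := by rw [hAT]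
  have h2 : (A *ᵥ (V *ᵥ (Vᵀ *ᵥ (A *ᵥ x)))) ⬝ᵥ (A *ᵥ x)
      ≤ (β * vecNorm (Vᵀ *ᵥ (A *ᵥ x))) * vecNorm (A *ᵥ x) := by
    refine (dot_le_norm_mul_norm _ _).trans ?_
    exact mul_le_mul_of_nonneg_right (h _) (vecNorm_nonneg _)
  rcases (vecNorm_nonneg (Vᵀ *ᵥ (A *ᵥ x))).eq_or_lt with h0 | h0
  · rw [← h0]; exact mul_nonneg hβ (vecNorm_nonneg _)
  · nlinarith [h1, h2]

end MoreLemmas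

set_option maxHeartbeats 2000000 in
theorem stmt_10 {n k : ℕ} (hk : 0 < k)
    (Ustar Vstar U : Matrix (Fin n) (Fin k) ℝ)
    (hUstar : Ustarᵀ * Ustar = 1) (hVstar : Vstarᵀ * Vstar = 1) (hU : Uᵀ * U = 1)
    (σ : Fin k → ℝ) (hσpos : ∀ i, 0 < σ i)
    (hσmono : ∀ i j : Fin k, i ≤ j → σ j ≤ σ i)
    (hσmin : 0 < sigmaMin (Ustarᵀ * U))
    (F : Matrix (Fin n) (Fin k) ℝ)
    (hF : specNorm F / sigmaMin (Ustarᵀ * U) < σ ⟨k - 1, Nat.sub_lt hk Nat.one_pos⟩) :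
    IsUnit (Vstarᵀ * (Vstar * Matrix.diagonal σ * (Ustarᵀ * U) - F)) ∧
    ∀ Vbar : Matrix (Fin n) (Fin k) ℝ, Vbarᵀ * Vbar = 1 →
      LinearMap.range Vbar.mulVecLin =
        LinearMap.range (Vstar * Matrix.diagonal σ * (Ustarᵀ * U) - F).mulVecLin →
      distS Vbar Vstar ≤ (specNorm F / sigmaMin (Ustarᵀ * U)) /
        (σ ⟨k - 1, Nat.sub_lt hk Nat.one_pos⟩ - specNorm F / sigmaMin (Ustarᵀ * U)) := by
  set D := Matrix.diagonal σ with hD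
  set B := Ustarᵀ * U with hBdef
  set s := sigmaMin B with hsdef
  set f := specNorm F with hfdef
  set σk := σ ⟨k - 1, Nat.sub_lt hk Nat.one_pos⟩ with hσkdef
  set Vt := Vstar * D * B - F with hVt
  clear_value D B s f σk Vt
  have hfnn : 0 ≤ f := by rw [hfdef]; exact specNorm_nonneg F hk
  have hsk : 0 < σk := by rw [hσkdef]; exact hσpos _
  have hBlow : ∀ x : Fin k → ℝ, s * vecNorm x ≤ vecNorm (B *ᵥ x) := by
    intro x; rw [hsdef]; exact sigmaMin_mul_le B x
  have hFub : ∀ y : Fin k → ℝ, vecNorm (F *ᵥ y) ≤ f * vecNorm y := by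
    intro y; rw [hfdef]; exact mulVec_le_specNorm F y
  have hfs : f < σk * s := by
    have h := hF
    rw [div_lt_iff₀ hσmin] at h
    linarith
  set e := σk * s - f with hedef
  clear_value e
  have he : 0 < e := by rw [hedef]; linarith
  have hσlb : ∀ i, σk ≤ σ i := by
    intro i
    rw [hσkdef]
    refine hσmono i ⟨k - 1, Nat.sub_lt hk Nat.one_pos⟩ ?_
    rw [Fin.le_def]
    show (i : ℕ) ≤ k - 1
    have := i.isLt
    omega
  have hdiag : ∀ y : Fin k → ℝ, σk * vecNorm y ≤ vecNorm (D *ᵥ y) := by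
    intro y
    refine le_of_sq_le_sq' (vecNorm_nonneg _) ?_
    rw [mul_pow, vecNorm, vecNorm, Real.sq_sqrt (sumsq_nonneg y),
      Real.sq_sqrt (sumsq_nonneg _), Finset.mul_sum]
    refine Finset.sum_le_sum fun i _ => ?_
    rw [hD, Matrix.mulVec_diagonal]
    have h1 := hσlb i
    have h2 := sq_nonneg (y i)
    have h3 : σk ^ 2 ≤ (σ i) ^ 2 := by nlinarith [hsk.le]
    calc σk ^ 2 * y i ^ 2 ≤ (σ i) ^ 2 * y i ^ 2 := mul_le_mul_of_nonneg_right h3 h2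
      _ = (σ i * y i) ^ 2 := by ring
  have hVstV : Vstarᵀ * Vt = D * B - Vstarᵀ * F := by
    rw [hVt, Matrix.mul_sub]
    congr 1
    simp only [← Matrix.mul_assoc, hVstar, Matrix.one_mul]
  have hlow : ∀ y : Fin k → ℝ, e * vecNorm y ≤ vecNorm ((Vstarᵀ * Vt) *ᵥ y) := by
    intro y
    have h1 : (Vstarᵀ * Vt) *ᵥ y = (D * B) *ᵥ y - Vstarᵀ *ᵥ (F *ᵥ y) := by
      rw [hVstV, Matrix.sub_mulVec, ← Matrix.mulVec_mulVec y Vstarᵀ F]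
    rw [h1]
    have h2 := vecNorm_sub_ge ((D * B) *ᵥ y) (Vstarᵀ *ᵥ (F *ᵥ y))
    have h3 : vecNorm (Vstarᵀ *ᵥ (F *ᵥ y)) ≤ vecNorm (F *ᵥ y) :=
      norm_transpose_mulVec_le hVstar _
    have h4 : vecNorm (F *ᵥ y) ≤ f * vecNorm y := hFub y
    have h5 : σk * (s * vecNorm y) ≤ vecNorm ((D * B) *ᵥ y) := by
      have hB := hBlow y
      have hD2 := hdiag (B *ᵥ y)
      rw [Matrix.mulVec_mulVec] at hD2
      calc σk * (s * vecNorm y) ≤ σk * vecNorm (B *ᵥ y) :=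
            mul_le_mul_of_nonneg_left hB hsk.le
        _ ≤ vecNorm ((D * B) *ᵥ y) := hD2
    rw [hedef]
    nlinarith [vecNorm_nonneg y]
  have hcoerVt : ∀ y : Fin k → ℝ, e * vecNorm y ≤ vecNorm (Vt *ᵥ y) := by
    intro y
    have h1 := hlow y
    have h2 : vecNorm ((Vstarᵀ * Vt) *ᵥ y) ≤ vecNorm (Vt *ᵥ y) := by
      rw [← Matrix.mulVec_mulVec y Vstarᵀ Vt]
      exact norm_transpose_mulVec_le hVstar _
    linarith
  refine ⟨isUnit_of_vec_lower he hlow, ?_⟩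
  intro Vbar hVbar hrange
  set t0 := f / e with ht0
  clear_value t0
  have ht0nn : 0 ≤ t0 := by rw [ht0]; exact div_nonneg hfnn he.le
  have hr1 : ∀ y : Fin k → ℝ, ∃ z, Vbar *ᵥ z = Vt *ᵥ y := by
    intro y
    have hmem : Vt *ᵥ y ∈ LinearMap.range Vbar.mulVecLin := by
      rw [hrange, LinearMap.mem_range]
      exact ⟨y, Matrix.mulVecLin_apply _ _⟩
    rw [LinearMap.mem_range] at hmem
    obtain ⟨z, hz⟩ := hmem
    exact ⟨z, by rw [← hz, Matrix.mulVecLin_apply]⟩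
  have hr2 : ∀ c : Fin k → ℝ, ∃ y, Vt *ᵥ y = Vbar *ᵥ c := by
    intro c
    have hmem : Vbar *ᵥ c ∈ LinearMap.range Vt.mulVecLin := by
      rw [← hrange, LinearMap.mem_range]
      exact ⟨c, Matrix.mulVecLin_apply _ _⟩
    rw [LinearMap.mem_range] at hmem
    obtain ⟨y, hy⟩ := hmem
    exact ⟨y, by rw [← hy, Matrix.mulVecLin_apply]⟩
  have hPVt : (1 - Vstar * Vstarᵀ) * Vt = -((1 - Vstar * Vstarᵀ) * F) := by
    have h1 : (Vstar * Vstarᵀ) * Vt = Vstar * D * B - (Vstar * Vstarᵀ) * F := by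
      rw [Matrix.mul_assoc, hVstV, Matrix.mul_sub, ← Matrix.mul_assoc Vstar Vstarᵀ F,
        ← Matrix.mul_assoc Vstar D B]
    have h2 : (1 - Vstar * Vstarᵀ) * Vt = Vt - (Vstar * Vstarᵀ) * Vt := by
      rw [Matrix.sub_mul, Matrix.one_mul]
    have h3 : -((1 - Vstar * Vstarᵀ) * F) = (Vstar * Vstarᵀ) * F - F := by
      rw [Matrix.sub_mul, Matrix.one_mul]; abel
    rw [h2, h3, h1, hVt]
    abel
  have halpha : ∀ c : Fin k → ℝ,
      vecNorm ((1 - Vstar * Vstarᵀ) *ᵥ (Vbar *ᵥ c)) ≤ t0 * vecNorm c := by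
    intro c
    obtain ⟨y, hy⟩ := hr2 c
    rw [← hy, Matrix.mulVec_mulVec, hPVt, Matrix.neg_mulVec, vecNorm_neg,
      ← Matrix.mulVec_mulVec y (1 - Vstar * Vstarᵀ) F]
    have h1 : vecNorm ((1 - Vstar * Vstarᵀ) *ᵥ (F *ᵥ y)) ≤ vecNorm (F *ᵥ y) :=
      norm_one_sub_proj_le hVstar _
    have h2 : vecNorm (F *ᵥ y) ≤ f * vecNorm y := hFub y
    have h3 : e * vecNorm y ≤ vecNorm c := by
      have h4 := hcoerVt y
      rw [hy, norm_mulVec_orth hVbar] at h4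
      exact h4
    have h8 : f * vecNorm y ≤ t0 * vecNorm c := by
      have h6 : t0 * (e * vecNorm y) ≤ t0 * vecNorm c := mul_le_mul_of_nonneg_left h3 ht0nn
      have h7 : t0 * e = f := by rw [ht0]; exact div_mul_cancel₀ f he.ne'
      calc f * vecNorm y = t0 * (e * vecNorm y) := by rw [← h7]; ring
        _ ≤ t0 * vecNorm c := h6
    linarith
  have hBunit : IsUnit B := isUnit_of_vec_lower hσmin hBlow
  have hDunit : IsUnit D := by
    rw [hD, Matrix.isUnit_iff_isUnit_det, Matrix.det_diagonal, isUnit_iff_ne_zero]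
    exact Finset.prod_ne_zero_iff.mpr fun i _ => (hσpos i).ne'
  have hDBunit : IsUnit (D * B) := hDunit.mul hBunit
  have hDBinv : (D * B) * (D * B)⁻¹ = 1 :=
    Matrix.mul_nonsing_inv _ ((Matrix.isUnit_iff_isUnit_det _).mp hDBunit)
  set β := f / (σk * s) with hβ
  clear_value β
  have hβnn : 0 ≤ β := by rw [hβ]; exact div_nonneg hfnn (mul_nonneg hsk.le hσmin.le)
  have hbeta : ∀ d : Fin k → ℝ,
      vecNorm ((1 - Vbar * Vbarᵀ) *ᵥ (Vstar *ᵥ d)) ≤ β * vecNorm d := by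
    intro d
    have hDBy : (D * B) *ᵥ ((D * B)⁻¹ *ᵥ d) = d := by
      rw [Matrix.mulVec_mulVec, hDBinv, Matrix.one_mulVec]
    have hVty : Vt *ᵥ ((D * B)⁻¹ *ᵥ d) = Vstar *ᵥ d - F *ᵥ ((D * B)⁻¹ *ᵥ d) := by
      rw [hVt, Matrix.sub_mulVec]
      congr 1
      rw [Matrix.mul_assoc, ← Matrix.mulVec_mulVec ((D * B)⁻¹ *ᵥ d) Vstar (D * B), hDBy]
    have hylen : σk * s * vecNorm ((D * B)⁻¹ *ᵥ d) ≤ vecNorm d := by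
      conv_rhs => rw [← hDBy]
      rw [← Matrix.mulVec_mulVec ((D * B)⁻¹ *ᵥ d) D B]
      have h1 := hdiag (B *ᵥ ((D * B)⁻¹ *ᵥ d))
      have h2 := hBlow ((D * B)⁻¹ *ᵥ d)
      nlinarith [vecNorm_nonneg ((D * B)⁻¹ *ᵥ d),
        mul_le_mul_of_nonneg_left h2 hsk.le]
    obtain ⟨z, hz⟩ := hr1 ((D * B)⁻¹ *ᵥ d)
    have h3 : vecNorm ((1 - Vbar * Vbarᵀ) *ᵥ (Vstar *ᵥ d))
        ≤ vecNorm (Vstar *ᵥ d - Vbar *ᵥ z) := perp_le_dist hVbar _ z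
    rw [hz, hVty] at h3
    have h4 : Vstar *ᵥ d - (Vstar *ᵥ d - F *ᵥ ((D * B)⁻¹ *ᵥ d))
        = F *ᵥ ((D * B)⁻¹ *ᵥ d) := by abel
    rw [h4] at h3
    have h5 : vecNorm (F *ᵥ ((D * B)⁻¹ *ᵥ d)) ≤ f * vecNorm ((D * B)⁻¹ *ᵥ d) :=
      hFub _
    have h6 : β * (σk * s) = f := by rw [hβ]; exact div_mul_cancel₀ f (mul_pos hsk hσmin).ne'
    nlinarith [vecNorm_nonneg ((D * B)⁻¹ *ᵥ d), vecNorm_nonneg d,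
      mul_le_mul_of_nonneg_left hylen hβnn]
  have hβt : β ≤ t0 := by
    rw [hβ, ht0]
    rw [div_le_div_iff₀ (mul_pos hsk hσmin) he]
    rw [hedef]
    nlinarith [sq_nonneg f]
  have hbound : ∀ x : Fin n → ℝ, vecNorm x = 1 →
      vecNorm ((Vbar * Vbarᵀ - Vstar * Vstarᵀ) *ᵥ x) ≤ t0 := by
    intro x hx
    have hsplit : Vbar * Vbarᵀ - Vstar * Vstarᵀ =
        (1 - Vstar * Vstarᵀ) * (Vbar * Vbarᵀ) - (Vstar * Vstarᵀ) * (1 - Vbar * Vbarᵀ) := by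
      noncomm_ring
    have hax : (Vbar * Vbarᵀ - Vstar * Vstarᵀ) *ᵥ x
        = (1 - Vstar * Vstarᵀ) *ᵥ ((Vbar * Vbarᵀ) *ᵥ x)
          + -((Vstar * Vstarᵀ) *ᵥ ((1 - Vbar * Vbarᵀ) *ᵥ x)) := by
      rw [hsplit, Matrix.sub_mulVec,
        ← Matrix.mulVec_mulVec x (1 - Vstar * Vstarᵀ) (Vbar * Vbarᵀ),
        ← Matrix.mulVec_mulVec x (Vstar * Vstarᵀ) (1 - Vbar * Vbarᵀ), sub_eq_add_neg]
    have horth : ((1 - Vstar * Vstarᵀ) *ᵥ ((Vbar * Vbarᵀ) *ᵥ x)) ⬝ᵥ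
        (-((Vstar * Vstarᵀ) *ᵥ ((1 - Vbar * Vbarᵀ) *ᵥ x))) = 0 := by
      rw [dotProduct_neg, ← Matrix.mulVec_mulVec ((1 - Vbar * Vbarᵀ) *ᵥ x) Vstar Vstarᵀ,
        proj_perp_dot hVstar, neg_zero]
    have hpyth : vecNorm ((Vbar * Vbarᵀ - Vstar * Vstarᵀ) *ᵥ x) ^ 2
        = vecNorm ((1 - Vstar * Vstarᵀ) *ᵥ ((Vbar * Vbarᵀ) *ᵥ x)) ^ 2
          + vecNorm ((Vstar * Vstarᵀ) *ᵥ ((1 - Vbar * Vbarᵀ) *ᵥ x)) ^ 2 := by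
      rw [hax, norm_add_sq_of_orth horth, vecNorm_neg]
    have hQx : (Vbar * Vbarᵀ) *ᵥ x = Vbar *ᵥ (Vbarᵀ *ᵥ x) :=
      (Matrix.mulVec_mulVec x Vbar Vbarᵀ).symm
    have hna : vecNorm ((1 - Vstar * Vstarᵀ) *ᵥ ((Vbar * Vbarᵀ) *ᵥ x))
        ≤ t0 * vecNorm ((Vbar * Vbarᵀ) *ᵥ x) := by
      have h1 := halpha (Vbarᵀ *ᵥ x)
      rw [← hQx] at h1
      have h2 : vecNorm (Vbarᵀ *ᵥ x) = vecNorm ((Vbar * Vbarᵀ) *ᵥ x) := by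
        rw [hQx, norm_mulVec_orth hVbar]
      rw [h2] at h1
      exact h1
    have hnb : vecNorm ((Vstar * Vstarᵀ) *ᵥ ((1 - Vbar * Vbarᵀ) *ᵥ x))
        ≤ β * vecNorm ((1 - Vbar * Vbarᵀ) *ᵥ x) := by
      have hbw : (Vstar * Vstarᵀ) *ᵥ ((1 - Vbar * Vbarᵀ) *ᵥ x)
          = Vstar *ᵥ (Vstarᵀ *ᵥ ((1 - Vbar * Vbarᵀ) *ᵥ x)) :=
        (Matrix.mulVec_mulVec _ Vstar Vstarᵀ).symm
      rw [hbw, norm_mulVec_orth hVstar]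
      exact sym_bound hVstar one_sub_proj_transpose (one_sub_proj_idem hVbar) hβnn hbeta x
    have hxsplit : vecNorm ((Vbar * Vbarᵀ) *ᵥ x) ^ 2
        + vecNorm ((1 - Vbar * Vbarᵀ) *ᵥ x) ^ 2 = 1 := by
      have hxx : x = (Vbar * Vbarᵀ) *ᵥ x + (1 - Vbar * Vbarᵀ) *ᵥ x := by
        rw [Matrix.sub_mulVec, Matrix.one_mulVec]; abel
      have ho : ((Vbar * Vbarᵀ) *ᵥ x) ⬝ᵥ ((1 - Vbar * Vbarᵀ) *ᵥ x) = 0 := by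
        rw [dotProduct_comm, hQx, proj_perp_dot hVbar]
      have hp := norm_add_sq_of_orth ho
      rw [← hxx, hx] at hp
      simpa using hp.symm
    refine le_of_sq_le_sq' ht0nn ?_
    rw [hpyth]
    have ha2 := mul_self_le_mul_self (vecNorm_nonneg _) hna
    have hnb' : vecNorm ((Vstar * Vstarᵀ) *ᵥ ((1 - Vbar * Vbarᵀ) *ᵥ x))
        ≤ t0 * vecNorm ((1 - Vbar * Vbarᵀ) *ᵥ x) :=
      hnb.trans (mul_le_mul_of_nonneg_right hβt (vecNorm_nonneg _))
    have hb2 := mul_self_le_mul_self (vecNorm_nonneg _) hnb'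
    nlinarith [ha2, hb2, hxsplit, sq_nonneg t0,
      vecNorm_nonneg ((Vbar * Vbarᵀ) *ᵥ x), vecNorm_nonneg ((1 - Vbar * Vbarᵀ) *ᵥ x)]
  have hgoal : distS Vbar Vstar ≤ t0 := by
    show sSup _ ≤ t0
    refine Real.sSup_le ?_ ht0nn
    rintro c ⟨x, hx, rfl⟩
    exact hbound x hx
  have hrhs : f / s / (σk - f / s) = t0 := by
    rw [ht0, hedef, div_div]
    congr 1
    have h1 : s ≠ 0 := hσmin.ne'
    field_simp
  rw [hrhs]
  exact hgoal
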